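/- arXiv:1510.03779 — 3 statements merged into one kernel-verified Lean document; each statement's English description precedes it below -/
import Mathlib

section
/- Under the hypotheses that T = L + f is a C^{1,α} diffeomorphism from U onto V with T(0)=0, DT(0)=L, and Lip(f,U) < m(L), the Hölder constant of DT⁻¹ satisfies Hol(DT⁻¹, V) ≤ (m(L) − Lip(f,U))^{−(2+α)} · Hol(Df, U). -/
open Set

/-- The Lipschitz constant of a `C¹` map on a set: the supremum of the operator norms of
its derivative. -/
noncomputable def lipC {E : Type*} [NormedAddCommGroup E] [NormedSpace ℝ E]
    (f : E → E) (U : Set E) : ℝ :=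
  ⨆ x : U, ‖fderiv ℝ f (x : E)‖

/-- The α-Hölder constant of the derivative of a map on a set. -/
noncomputable def holC {E : Type*} [NormedAddCommGroup E] [NormedSpace ℝ E]
    (α : ℝ) (f : E → E) (U : Set E) : ℝ :=
  ⨆ p : U × U, ‖fderiv ℝ f (p.1 : E) - fderiv ℝ f (p.2 : E)‖ / ‖(p.1 : E) - (p.2 : E)‖ ^ α

/-- If `T = L + f` is a `C^{1,α}` diffeomorphism from a convex open neighborhood `U` of
`0` onto `V` with `T(0) = 0`, `DT(0) = L`, and `Lip(f,U) < m(L) = ‖L⁻¹‖⁻¹`, then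
`Hol(DT⁻¹, V) ≤ (m(L) − Lip(f,U))^{−(2+α)} · Hol(Df, U)`. -/
theorem holC_inverse_le
    {E : Type*} [NormedAddCommGroup E] [NormedSpace ℝ E] [CompleteSpace E]
    {α : ℝ} (hα0 : 0 < α) (hα1 : α < 1)
    (U V : Set E) (hU : IsOpen U) (hUc : Convex ℝ U) (hV : IsOpen V) (hVc : Convex ℝ V)
    (h0U : (0 : E) ∈ U)
    (L : E ≃L[ℝ] E) (f T Tinv : E → E)
    (hT : ∀ x, T x = L x + f x)
    (hf0 : f 0 = 0) (hDf0 : fderiv ℝ f 0 = 0)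
    (hfd : ∀ x ∈ U, DifferentiableAt ℝ f x)
    (himg : T '' U = V)
    (hinv1 : ∀ x ∈ U, Tinv (T x) = x) (hinv2 : ∀ y ∈ V, T (Tinv y) = y)
    (hTinvd : ∀ y ∈ V, DifferentiableAt ℝ Tinv y)
    (hbf : BddAbove (Set.range fun x : U => ‖fderiv ℝ f (x : E)‖))
    (hhf : BddAbove (Set.range fun p : U × U =>
      ‖fderiv ℝ f (p.1 : E) - fderiv ℝ f (p.2 : E)‖ / ‖(p.1 : E) - (p.2 : E)‖ ^ α))
    (hlf : lipC f U < ‖(L.symm : E →L[ℝ] E)‖⁻¹) :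
    holC α Tinv V ≤
      (‖(L.symm : E →L[ℝ] E)‖⁻¹ - lipC f U) ^ (-((2 : ℝ) + α)) * holC α f U := by
  set m : ℝ := ‖(L.symm : E →L[ℝ] E)‖⁻¹ with hm
  set ℓ : ℝ := lipC f U with hℓ
  set H : ℝ := holC α f U with hH
  set c : ℝ := m - ℓ with hcdef
  -- basic positivity facts
  have hℓ0 : (0:ℝ) ≤ ℓ := by
    have := le_ciSup hbf (⟨0, h0U⟩ : U)
    simp [hDf0] at this; exact this
  have hH0 : (0:ℝ) ≤ H := by
    have := le_ciSup hhf ((⟨0, h0U⟩, ⟨0, h0U⟩) : U × U)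
    simp at this; exact this
  have hc : (0:ℝ) < c := sub_pos.mpr hlf
  have hm0 : (0:ℝ) < m := lt_of_le_of_lt hℓ0 hlf
  have hLs : (0:ℝ) < ‖(L.symm : E →L[ℝ] E)‖ := by
    rcases (norm_nonneg (L.symm : E →L[ℝ] E)).lt_or_eq with h | h
    · exact h
    · exfalso; rw [hm, ← h] at hm0; simp at hm0
  -- differentiability and derivative of T
  have hTfun : T = fun x => L x + f x := funext hT
  have hTd : ∀ x ∈ U, HasFDerivAt T ((L : E →L[ℝ] E) + fderiv ℝ f x) x := by
    intro x hx
    rw [hTfun]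
    exact L.hasFDerivAt.add (hfd x hx).hasFDerivAt
  have hDT : ∀ x ∈ U, fderiv ℝ T x = (L : E →L[ℝ] E) + fderiv ℝ f x :=
    fun x hx => (hTd x hx).fderiv
  have hTV : ∀ x ∈ U, T x ∈ V := fun x hx => himg ▸ mem_image_of_mem T hx
  have hTinvU : ∀ y ∈ V, Tinv y ∈ U := by
    intro y hy
    rw [← himg] at hy
    obtain ⟨x, hxU, hxy⟩ := hy
    rw [← hxy, hinv1 x hxU]; exact hxU
  -- chain rule identities
  have key1 : ∀ x ∈ U,
      (fderiv ℝ Tinv (T x)).comp (fderiv ℝ T x) = ContinuousLinearMap.id ℝ E := by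
    intro x hx
    have h1 : Tinv ∘ T =ᶠ[nhds x] id :=
      Filter.eventuallyEq_of_mem (hU.mem_nhds hx) fun z hz => hinv1 z hz
    have h2 : fderiv ℝ (Tinv ∘ T) x = fderiv ℝ (id : E → E) x := h1.fderiv_eq
    rw [fderiv_id] at h2
    rw [← h2]
    exact (fderiv_comp (x := x) (hTinvd _ (hTV x hx)) (hTd x hx).differentiableAt).symm
  have key2 : ∀ y ∈ V,
      (fderiv ℝ T (Tinv y)).comp (fderiv ℝ Tinv y) = ContinuousLinearMap.id ℝ E := by
    intro y hy
    have h1 : T ∘ Tinv =ᶠ[nhds y] id :=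
      Filter.eventuallyEq_of_mem (hV.mem_nhds hy) fun z hz => hinv2 z hz
    have h2 : fderiv ℝ (T ∘ Tinv) y = fderiv ℝ (id : E → E) y := h1.fderiv_eq
    rw [fderiv_id] at h2
    rw [← h2]
    exact (fderiv_comp (x := y) (hTd _ (hTinvU y hy)).differentiableAt (hTinvd y hy)).symm
  -- lower bound for DT
  have hA : ∀ x ∈ U, ∀ v : E, c * ‖v‖ ≤ ‖fderiv ℝ T x v‖ := by
    intro x hx v
    have hDfx : ‖fderiv ℝ f x‖ ≤ ℓ := le_ciSup hbf (⟨x, hx⟩ : U)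
    have hLv : m * ‖v‖ ≤ ‖L v‖ := by
      have h1 : ‖v‖ ≤ ‖(L.symm : E →L[ℝ] E)‖ * ‖L v‖ := by
        calc ‖v‖ = ‖L.symm (L v)‖ := by simp
          _ ≤ _ := (L.symm : E →L[ℝ] E).le_opNorm _
      rw [hm, inv_mul_le_iff₀ hLs]
      linarith [h1]
    have hDv : ‖fderiv ℝ f x v‖ ≤ ℓ * ‖v‖ := by
      calc ‖fderiv ℝ f x v‖ ≤ ‖fderiv ℝ f x‖ * ‖v‖ := (fderiv ℝ f x).le_opNorm v
        _ ≤ ℓ * ‖v‖ := by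
            have := norm_nonneg v; nlinarith
    rw [hDT x hx]
    have happ : ((L : E →L[ℝ] E) + fderiv ℝ f x) v = L v + fderiv ℝ f x v := rfl
    rw [happ]
    have htri : ‖L v‖ ≤ ‖L v + fderiv ℝ f x v‖ + ‖fderiv ℝ f x v‖ := by
      calc ‖L v‖ = ‖(L v + fderiv ℝ f x v) + (-(fderiv ℝ f x v))‖ := by
            congr 1; abel
        _ ≤ _ := by
            refine (norm_add_le _ _).trans ?_
            rw [norm_neg]
    have : c * ‖v‖ = m * ‖v‖ - ℓ * ‖v‖ := by rw [hcdef]; ring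
    linarith
  -- norm bound for DTinv
  have hB : ∀ y ∈ V, ‖fderiv ℝ Tinv y‖ ≤ c⁻¹ := by
    intro y hy
    refine ContinuousLinearMap.opNorm_le_bound _ (by positivity) fun w => ?_
    have happ := congrArg (fun g : E →L[ℝ] E => g w) (key2 y hy)
    simp only [ContinuousLinearMap.coe_comp', Function.comp_apply,
      ContinuousLinearMap.coe_id', id_eq] at happ
    have h1 : c * ‖fderiv ℝ Tinv y w‖ ≤ ‖w‖ := by
      have := hA _ (hTinvU y hy) (fderiv ℝ Tinv y w)
      rwa [happ] at this
    rw [inv_mul_eq_div, le_div_iff₀ hc]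
    linarith
  -- Lipschitz bound for Tinv
  have hLip : ∀ y₁ ∈ V, ∀ y₂ ∈ V, ‖Tinv y₁ - Tinv y₂‖ ≤ c⁻¹ * ‖y₁ - y₂‖ :=
    fun y₁ hy₁ y₂ hy₂ =>
      hVc.norm_image_sub_le_of_norm_fderiv_le hTinvd hB hy₂ hy₁
  -- exponent identity
  have hexp : c ^ (-((2:ℝ) + α)) = c⁻¹ * c⁻¹ * (c⁻¹) ^ α := by
    rw [Real.rpow_neg hc.le, Real.rpow_add hc, Real.inv_rpow hc.le, mul_inv]
    have h2 : c ^ (2:ℝ) = c * c := by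
      rw [show (2:ℝ) = ((2:ℕ):ℝ) by norm_num, Real.rpow_natCast]; ring
    rw [h2, mul_inv]
  -- main bound, term by term
  refine Real.iSup_le ?_ (by positivity)
  rintro ⟨⟨y₁, hy₁⟩, ⟨y₂, hy₂⟩⟩
  simp only
  by_cases hyy : y₁ = y₂
  · subst hyy; simp; positivity
  set x₁ := Tinv y₁ with hx₁
  set x₂ := Tinv y₂ with hx₂
  have hx₁U : x₁ ∈ U := hTinvU y₁ hy₁
  have hx₂U : x₂ ∈ U := hTinvU y₂ hy₂
  have hxx : x₁ ≠ x₂ := by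
    intro h
    apply hyy
    rw [← hinv2 y₁ hy₁, ← hinv2 y₂ hy₂, ← hx₁, ← hx₂, h]
  set B₁ := fderiv ℝ Tinv y₁ with hB₁
  set B₂ := fderiv ℝ Tinv y₂ with hB₂
  set A₁ := fderiv ℝ T x₁ with hA₁
  set A₂ := fderiv ℝ T x₂ with hA₂
  have k1 : B₁.comp A₁ = ContinuousLinearMap.id ℝ E := by
    have := key1 x₁ hx₁U
    rwa [hinv2 y₁ hy₁] at this
  have k2 : A₂.comp B₂ = ContinuousLinearMap.id ℝ E := key2 y₂ hy₂
  have hdiff : B₁ - B₂ = (B₁.comp (A₂ - A₁)).comp B₂ := by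
    have : B₁ - B₂ = (B₁.comp (A₂.comp B₂)) - ((B₁.comp A₁).comp B₂) := by
      rw [k1, k2]; simp
    rw [this, ← ContinuousLinearMap.comp_assoc, ← ContinuousLinearMap.sub_comp,
      ← ContinuousLinearMap.comp_sub]
  have hAsub : A₂ - A₁ = fderiv ℝ f x₂ - fderiv ℝ f x₁ := by
    rw [hA₁, hA₂, hDT _ hx₁U, hDT _ hx₂U]; abel
  have hHol : ‖fderiv ℝ f x₂ - fderiv ℝ f x₁‖ ≤ H * ‖x₂ - x₁‖ ^ α := by
    have hpos : (0:ℝ) < ‖x₂ - x₁‖ ^ α :=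
      Real.rpow_pos_of_pos (norm_pos_iff.mpr (sub_ne_zero.mpr (Ne.symm hxx))) α
    have hsup : ‖fderiv ℝ f x₂ - fderiv ℝ f x₁‖ / ‖x₂ - x₁‖ ^ α ≤ H :=
      le_ciSup hhf ((⟨x₂, hx₂U⟩, ⟨x₁, hx₁U⟩) : U × U)
    rw [div_le_iff₀ hpos] at hsup
    exact hsup
  have hxy : ‖x₂ - x₁‖ ^ α ≤ (c⁻¹) ^ α * ‖y₁ - y₂‖ ^ α := by
    have h1 : ‖x₂ - x₁‖ ≤ c⁻¹ * ‖y₂ - y₁‖ := hLip y₂ hy₂ y₁ hy₁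
    calc ‖x₂ - x₁‖ ^ α ≤ (c⁻¹ * ‖y₂ - y₁‖) ^ α :=
          Real.rpow_le_rpow (norm_nonneg _) h1 hα0.le
      _ = (c⁻¹) ^ α * ‖y₂ - y₁‖ ^ α := Real.mul_rpow (by positivity) (norm_nonneg _)
      _ = (c⁻¹) ^ α * ‖y₁ - y₂‖ ^ α := by rw [norm_sub_rev]
  have hnorm : ‖B₁ - B₂‖ ≤ c⁻¹ * (H * ((c⁻¹) ^ α * ‖y₁ - y₂‖ ^ α)) * c⁻¹ := by
    rw [hdiff]
    calc ‖(B₁.comp (A₂ - A₁)).comp B₂‖ ≤ ‖B₁.comp (A₂ - A₁)‖ * ‖B₂‖ :=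
          ContinuousLinearMap.opNorm_comp_le _ _
      _ ≤ (‖B₁‖ * ‖A₂ - A₁‖) * ‖B₂‖ := by
          gcongr; exact ContinuousLinearMap.opNorm_comp_le _ _
      _ ≤ c⁻¹ * (H * ((c⁻¹) ^ α * ‖y₁ - y₂‖ ^ α)) * c⁻¹ := by
          gcongr ?_ * ?_ * ?_
          · exact hB y₁ hy₁
          · rw [hAsub]
            calc ‖fderiv ℝ f x₂ - fderiv ℝ f x₁‖ ≤ H * ‖x₂ - x₁‖ ^ α := hHol
              _ ≤ H * ((c⁻¹) ^ α * ‖y₁ - y₂‖ ^ α) := by gcongr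
          · exact hB y₂ hy₂
  have hdpos : (0:ℝ) < ‖y₁ - y₂‖ ^ α :=
    Real.rpow_pos_of_pos (norm_pos_iff.mpr (sub_ne_zero.mpr hyy)) α
  rw [div_le_iff₀ hdpos, hexp]
  calc ‖B₁ - B₂‖ ≤ c⁻¹ * (H * ((c⁻¹) ^ α * ‖y₁ - y₂‖ ^ α)) * c⁻¹ := hnorm
    _ = c⁻¹ * c⁻¹ * (c⁻¹) ^ α * H * ‖y₁ - y₂‖ ^ α := by ring
end

section
/- Under the same hypotheses, with Lip(T) ≥ 1, the Hölder constant of the derivative of f_m = T^m − L^m satisfies Hol(Df_m, U_m) ≤ m · Hol(Df, U) · Lip(T, U)^{(1+α)(m−1)}. -/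
open Set

/-- Let `T = L + f` be a `C^{1,α}` diffeomorphism onto its image on a convex open
neighborhood `U` of `0`, with `T(0)=0`, `DT(0)=L`, `Lip(f,U) < m(L)`, and `Lip(T,U) ≥ 1`.
For a positive integer `m`, set `f_m = T^m − L^m` on `U_m = ⋂_{j=0}^m T^{-j}U`. Then
`Hol(Df_m, U_m) ≤ m · Hol(Df,U) · Lip(T,U)^{(1+α)(m−1)}`. -/
theorem holC_iterate_nonlinear_part_le
    {E : Type*} [NormedAddCommGroup E] [NormedSpace ℝ E] [CompleteSpace E]
    {α : ℝ} (hα0 : 0 < α) (hα1 : α < 1)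
    (U : Set E) (hU : IsOpen U) (hUc : Convex ℝ U) (h0U : (0 : E) ∈ U)
    (L : E ≃L[ℝ] E) (f T : E → E)
    (hT : ∀ x, T x = L x + f x)
    (hf0 : f 0 = 0) (hDf0 : fderiv ℝ f 0 = 0)
    (hfd : ∀ x ∈ U, DifferentiableAt ℝ f x)
    (hbf : BddAbove (Set.range fun x : U => ‖fderiv ℝ f (x : E)‖))
    (hbT : BddAbove (Set.range fun x : U => ‖fderiv ℝ T (x : E)‖))
    (hhf : BddAbove (Set.range fun p : U × U =>
      ‖fderiv ℝ f (p.1 : E) - fderiv ℝ f (p.2 : E)‖ / ‖(p.1 : E) - (p.2 : E)‖ ^ α))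
    (hlf : lipC f U < ‖(L.symm : E →L[ℝ] E)‖⁻¹)
    (hlipT : 1 ≤ lipC T U)
    (m : ℕ) (hm : 0 < m)
    (hconv : Convex ℝ (⋂ j ∈ Finset.range (m + 1), T^[j] ⁻¹' U)) :
    holC α (fun x => T^[m] x - ((L : E →L[ℝ] E) ^ m) x)
        (⋂ j ∈ Finset.range (m + 1), T^[j] ⁻¹' U) ≤
      (m : ℝ) * holC α f U * lipC T U ^ (((1 : ℝ) + α) * ((m : ℝ) - 1)) := by
  set S : Set E := ⋂ j ∈ Finset.range (m + 1), T^[j] ⁻¹' U with hS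
  set K : ℝ := lipC T U with hKdef
  set H : ℝ := holC α f U with hHdef
  have hK1 : (1 : ℝ) ≤ K := hlipT
  have hK0 : (0 : ℝ) < K := lt_of_lt_of_le one_pos hK1
  -- membership facts
  have hmem : ∀ x ∈ S, ∀ j ≤ m, T^[j] x ∈ U := by
    intro x hx j hj
    simp only [hS, Set.mem_iInter, Set.mem_preimage] at hx
    exact hx j (Finset.mem_range.mpr (Nat.lt_succ_of_le hj))
  have hSU : S ⊆ U := fun x hx => by simpa using hmem x hx 0 (Nat.zero_le m)
  have hT0 : T 0 = 0 := by simp [hT 0, hf0]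
  have h0S : (0 : E) ∈ S := by
    simp only [hS, Set.mem_iInter, Set.mem_preimage]
    intro j _
    rw [Function.iterate_fixed hT0 j]
    exact h0U
  -- derivative of T
  have hTfd : ∀ x ∈ U, HasFDerivAt T ((L : E →L[ℝ] E) + fderiv ℝ f x) x := by
    intro x hx
    have h1 : HasFDerivAt (fun y => (L : E →L[ℝ] E) y + f y)
        ((L : E →L[ℝ] E) + fderiv ℝ f x) x :=
      ((L : E →L[ℝ] E).hasFDerivAt).add (hfd x hx).hasFDerivAt
    have : T = fun y => (L : E →L[ℝ] E) y + f y := by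
      funext y; simpa using hT y
    rw [this]; exact h1
  have hTdiff : ∀ x ∈ U, DifferentiableAt ℝ T x := fun x hx =>
    (hTfd x hx).differentiableAt
  have hfderivT : ∀ x ∈ U, fderiv ℝ T x = (L : E →L[ℝ] E) + fderiv ℝ f x :=
    fun x hx => (hTfd x hx).fderiv
  have hKnorm : ∀ x ∈ U, ‖fderiv ℝ T x‖ ≤ K := fun x hx =>
    le_ciSup hbT (⟨x, hx⟩ : U)
  -- nonnegativity of H
  have hH0 : (0 : ℝ) ≤ H := by
    have := le_ciSup hhf ((⟨⟨0, h0U⟩, ⟨0, h0U⟩⟩ : U × U))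
    simpa [hHdef, holC] using this
  -- Hölder estimate for f, and hence for T
  have hHol : ∀ x ∈ U, ∀ y ∈ U, ‖fderiv ℝ f x - fderiv ℝ f y‖ ≤ H * ‖x - y‖ ^ α := by
    intro x hx y hy
    rcases eq_or_ne x y with rfl | hne
    · simp [Real.zero_rpow hα0.ne']
    · have hpos : (0 : ℝ) < ‖x - y‖ ^ α :=
        Real.rpow_pos_of_pos (norm_pos_iff.mpr (sub_ne_zero.mpr hne)) α
      have h := le_ciSup hhf ((⟨⟨x, hx⟩, ⟨y, hy⟩⟩ : U × U))
      exact (div_le_iff₀ hpos).mp h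
  have hHolT : ∀ x ∈ U, ∀ y ∈ U,
      ‖fderiv ℝ T x - fderiv ℝ T y‖ ≤ H * ‖x - y‖ ^ α := by
    intro x hx y hy
    rw [hfderivT x hx, hfderivT y hy, add_sub_add_left_eq_sub]
    exact hHol x hx y hy
  -- differentiability and derivative bound for iterates on S
  have key : ∀ k, k ≤ m → ∀ x ∈ S,
      DifferentiableAt ℝ (T^[k]) x ∧ ‖fderiv ℝ (T^[k]) x‖ ≤ K ^ k := by
    intro k
    induction k with
    | zero =>
      intro _ x _
      constructor
      · simpa using differentiableAt_id'
      · simpa [Function.iterate_zero, fderiv_id'] using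
          (ContinuousLinearMap.norm_id_le : ‖(ContinuousLinearMap.id ℝ E)‖ ≤ 1)
    | succ k ih =>
      intro hk x hx
      have hk' : k ≤ m := Nat.le_of_succ_le hk
      obtain ⟨hdk, hnk⟩ := ih hk' x hx
      have hTk : T^[k] x ∈ U := hmem x hx k hk'
      have hdT : DifferentiableAt ℝ T (T^[k] x) := hTdiff _ hTk
      have hcomp : T^[k + 1] = T ∘ T^[k] := Function.iterate_succ' T k
      constructor
      · rw [hcomp]; exact hdT.comp x hdk
      · rw [hcomp, fderiv_comp x hdT hdk]
        calc ‖(fderiv ℝ T (T^[k] x)).comp (fderiv ℝ (T^[k]) x)‖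
            ≤ ‖fderiv ℝ T (T^[k] x)‖ * ‖fderiv ℝ (T^[k]) x‖ :=
              ContinuousLinearMap.opNorm_comp_le _ _
          _ ≤ K * K ^ k := by
              apply mul_le_mul (hKnorm _ hTk) hnk (norm_nonneg _) hK0.le
          _ = K ^ (k + 1) := by ring
  -- Lipschitz bound for iterates on S
  have hLip : ∀ k, k ≤ m → ∀ x ∈ S, ∀ y ∈ S,
      ‖T^[k] x - T^[k] y‖ ≤ K ^ k * ‖x - y‖ := by
    intro k hk x hx y hy
    exact hconv.norm_image_sub_le_of_norm_fderiv_le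
      (fun z hz => (key k hk z hz).1) (fun z hz => (key k hk z hz).2) hy hx
  -- main Hölder induction
  have main : ∀ k, k + 1 ≤ m → ∀ x ∈ S, ∀ y ∈ S,
      ‖fderiv ℝ (T^[k + 1]) x - fderiv ℝ (T^[k + 1]) y‖ ≤
        ((k : ℝ) + 1) * H * (K ^ k * (K ^ k) ^ α) * ‖x - y‖ ^ α := by
    intro k
    induction k with
    | zero =>
      intro _ x hx y hy
      have := hHolT x (hSU hx) y (hSU hy)
      simpa [Function.iterate_one] using this
    | succ k ih =>
      intro hk x hx y hy
      have hk1 : k + 1 ≤ m := Nat.le_of_succ_le hk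
      have hxS := hx; have hyS := hy
      set a := T^[k + 1] x with ha
      set b := T^[k + 1] y with hb
      have haU : a ∈ U := hmem x hx (k + 1) hk1
      have hbU : b ∈ U := hmem y hy (k + 1) hk1
      obtain ⟨hdx, hnx⟩ := key (k + 1) hk1 x hx
      obtain ⟨hdy, hny⟩ := key (k + 1) hk1 y hy
      have hdTa : DifferentiableAt ℝ T a := hTdiff _ haU
      have hdTb : DifferentiableAt ℝ T b := hTdiff _ hbU
      have hcomp : T^[k + 2] = T ∘ T^[k + 1] := Function.iterate_succ' T (k + 1)
      have hx2 : fderiv ℝ (T^[k + 2]) x = (fderiv ℝ T a).comp (fderiv ℝ (T^[k + 1]) x) := by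
        rw [hcomp]; exact fderiv_comp x hdTa hdx
      have hy2 : fderiv ℝ (T^[k + 2]) y = (fderiv ℝ T b).comp (fderiv ℝ (T^[k + 1]) y) := by
        rw [hcomp]; exact fderiv_comp y hdTb hdy
      set A1 := fderiv ℝ T a
      set A2 := fderiv ℝ T b
      set B1 := fderiv ℝ (T^[k + 1]) x
      set B2 := fderiv ℝ (T^[k + 1]) y
      have hsplit : A1.comp B1 - A2.comp B2 = (A1 - A2).comp B1 + A2.comp (B1 - B2) := by
        rw [ContinuousLinearMap.sub_comp, ContinuousLinearMap.comp_sub]; abel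
      -- bound on ‖a - b‖^α
      have hab : ‖a - b‖ ≤ K ^ (k + 1) * ‖x - y‖ := by
        have := hLip (k + 1) hk1 y hy x hx
        simpa [ha, hb, norm_sub_rev] using this
      have hxyα : (0 : ℝ) ≤ ‖x - y‖ ^ α := Real.rpow_nonneg (norm_nonneg _) α
      have habα : ‖a - b‖ ^ α ≤ (K ^ (k + 1)) ^ α * ‖x - y‖ ^ α := by
        calc ‖a - b‖ ^ α ≤ (K ^ (k + 1) * ‖x - y‖) ^ α :=
              Real.rpow_le_rpow (norm_nonneg _) hab hα0.le
          _ = (K ^ (k + 1)) ^ α * ‖x - y‖ ^ α :=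
              Real.mul_rpow (by positivity) (norm_nonneg _)
      -- term bounds
      have hterm1 : ‖(A1 - A2).comp B1‖ ≤
          H * ((K ^ (k + 1)) ^ α * ‖x - y‖ ^ α) * K ^ (k + 1) := by
        calc ‖(A1 - A2).comp B1‖ ≤ ‖A1 - A2‖ * ‖B1‖ :=
              ContinuousLinearMap.opNorm_comp_le _ _
          _ ≤ (H * ‖a - b‖ ^ α) * K ^ (k + 1) := by
              apply mul_le_mul (hHolT a haU b hbU) hnx (norm_nonneg _)
              positivity
          _ ≤ H * ((K ^ (k + 1)) ^ α * ‖x - y‖ ^ α) * K ^ (k + 1) := by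
              have : H * ‖a - b‖ ^ α ≤ H * ((K ^ (k + 1)) ^ α * ‖x - y‖ ^ α) :=
                mul_le_mul_of_nonneg_left habα hH0
              apply mul_le_mul_of_nonneg_right this (by positivity)
      have hterm2 : ‖A2.comp (B1 - B2)‖ ≤
          K * (((k : ℝ) + 1) * H * (K ^ k * (K ^ k) ^ α) * ‖x - y‖ ^ α) := by
        calc ‖A2.comp (B1 - B2)‖ ≤ ‖A2‖ * ‖B1 - B2‖ :=
              ContinuousLinearMap.opNorm_comp_le _ _
          _ ≤ K * (((k : ℝ) + 1) * H * (K ^ k * (K ^ k) ^ α) * ‖x - y‖ ^ α) := by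
              apply mul_le_mul (hKnorm b hbU) (ih hk1 x hx y hy) (norm_nonneg _) hK0.le
      have hKk : (K ^ k) ^ α ≤ (K ^ (k + 1)) ^ α := by
        apply Real.rpow_le_rpow (by positivity) _ hα0.le
        exact pow_le_pow_right₀ hK1 (Nat.le_succ k)
      have hKα0 : (0 : ℝ) ≤ (K ^ (k + 1)) ^ α := Real.rpow_nonneg (by positivity) α
      calc ‖fderiv ℝ (T^[k + 1 + 1]) x - fderiv ℝ (T^[k + 1 + 1]) y‖
          = ‖(A1 - A2).comp B1 + A2.comp (B1 - B2)‖ := by rw [hx2, hy2, hsplit]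
        _ ≤ ‖(A1 - A2).comp B1‖ + ‖A2.comp (B1 - B2)‖ := norm_add_le _ _
        _ ≤ H * ((K ^ (k + 1)) ^ α * ‖x - y‖ ^ α) * K ^ (k + 1)
            + K * (((k : ℝ) + 1) * H * (K ^ k * (K ^ k) ^ α) * ‖x - y‖ ^ α) :=
            add_le_add hterm1 hterm2
        _ ≤ ((k : ℝ) + 1 + 1) * H * (K ^ (k + 1) * (K ^ (k + 1)) ^ α) * ‖x - y‖ ^ α := by
            have h2 : K * (((k : ℝ) + 1) * H * (K ^ k * (K ^ k) ^ α) * ‖x - y‖ ^ α)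
                ≤ ((k : ℝ) + 1) * H * (K ^ (k + 1) * (K ^ (k + 1)) ^ α) * ‖x - y‖ ^ α := by
              have : K * (K ^ k * (K ^ k) ^ α) ≤ K ^ (k + 1) * (K ^ (k + 1)) ^ α := by
                have h3 : K * K ^ k = K ^ (k + 1) := by ring
                calc K * (K ^ k * (K ^ k) ^ α) = (K * K ^ k) * (K ^ k) ^ α := by ring
                  _ ≤ K ^ (k + 1) * (K ^ (k + 1)) ^ α := by
                      rw [h3]
                      exact mul_le_mul_of_nonneg_left hKk (by positivity)
              calc K * (((k : ℝ) + 1) * H * (K ^ k * (K ^ k) ^ α) * ‖x - y‖ ^ α)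
                  = ((k : ℝ) + 1) * H * (K * (K ^ k * (K ^ k) ^ α)) * ‖x - y‖ ^ α := by ring
                _ ≤ ((k : ℝ) + 1) * H * (K ^ (k + 1) * (K ^ (k + 1)) ^ α) * ‖x - y‖ ^ α := by
                    apply mul_le_mul_of_nonneg_right _ hxyα
                    apply mul_le_mul_of_nonneg_left this (by positivity)
            have h1 : H * ((K ^ (k + 1)) ^ α * ‖x - y‖ ^ α) * K ^ (k + 1)
                = 1 * H * (K ^ (k + 1) * (K ^ (k + 1)) ^ α) * ‖x - y‖ ^ α := by ring
            calc H * ((K ^ (k + 1)) ^ α * ‖x - y‖ ^ α) * K ^ (k + 1)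
                + K * (((k : ℝ) + 1) * H * (K ^ k * (K ^ k) ^ α) * ‖x - y‖ ^ α)
                ≤ 1 * H * (K ^ (k + 1) * (K ^ (k + 1)) ^ α) * ‖x - y‖ ^ α
                  + ((k : ℝ) + 1) * H * (K ^ (k + 1) * (K ^ (k + 1)) ^ α) * ‖x - y‖ ^ α := by
                  rw [← h1]; exact add_le_add le_rfl h2
              _ = ((k : ℝ) + 1 + 1) * H * (K ^ (k + 1) * (K ^ (k + 1)) ^ α) * ‖x - y‖ ^ α := by
                  ring
        _ = (((k : ℕ) + 1 : ℕ) + 1 : ℝ) * H * (K ^ (k + 1) * (K ^ (k + 1)) ^ α) * ‖x - y‖ ^ α := by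
            push_cast; ring
  -- now finish
  have hRHS0 : (0 : ℝ) ≤ (m : ℝ) * H * K ^ (((1 : ℝ) + α) * ((m : ℝ) - 1)) := by
    apply mul_nonneg (mul_nonneg (Nat.cast_nonneg m) hH0)
    exact (Real.rpow_pos_of_pos hK0 _).le
  -- identify K^{m-1} * (K^{m-1})^α with the rpow expression
  have hm1 : ((m - 1 : ℕ) : ℝ) = (m : ℝ) - 1 := by
    rw [Nat.cast_sub hm, Nat.cast_one]
  have hexp : K ^ (m - 1) * (K ^ (m - 1)) ^ α = K ^ (((1 : ℝ) + α) * ((m : ℝ) - 1)) := by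
    rw [← Real.rpow_natCast K (m - 1), ← Real.rpow_mul hK0.le, ← Real.rpow_add hK0, hm1]
    ring_nf
  -- pointwise bound for the nonlinear part
  have hpt : ∀ x ∈ S, ∀ y ∈ S,
      ‖fderiv ℝ (fun z => T^[m] z - ((L : E →L[ℝ] E) ^ m) z) x -
        fderiv ℝ (fun z => T^[m] z - ((L : E →L[ℝ] E) ^ m) z) y‖ ≤
        (m : ℝ) * H * K ^ (((1 : ℝ) + α) * ((m : ℝ) - 1)) * ‖x - y‖ ^ α := by
    intro x hx y hy
    have hdx := (key m le_rfl x hx).1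
    have hdy := (key m le_rfl y hy).1
    have hgx : fderiv ℝ (fun z => T^[m] z - ((L : E →L[ℝ] E) ^ m) z) x =
        fderiv ℝ (T^[m]) x - ((L : E →L[ℝ] E) ^ m) :=
      (hdx.hasFDerivAt.sub ((L : E →L[ℝ] E) ^ m).hasFDerivAt).fderiv
    have hgy : fderiv ℝ (fun z => T^[m] z - ((L : E →L[ℝ] E) ^ m) z) y =
        fderiv ℝ (T^[m]) y - ((L : E →L[ℝ] E) ^ m) :=
      (hdy.hasFDerivAt.sub ((L : E →L[ℝ] E) ^ m).hasFDerivAt).fderiv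
    rw [hgx, hgy, sub_sub_sub_cancel_right]
    obtain ⟨k, rfl⟩ : ∃ k, m = k + 1 := ⟨m - 1, (Nat.succ_pred_eq_of_pos hm).symm⟩
    have hb := main k le_rfl x hx y hy
    calc ‖fderiv ℝ (T^[k + 1]) x - fderiv ℝ (T^[k + 1]) y‖
        ≤ ((k : ℝ) + 1) * H * (K ^ k * (K ^ k) ^ α) * ‖x - y‖ ^ α := hb
      _ = ((k + 1 : ℕ) : ℝ) * H * K ^ (((1 : ℝ) + α) * (((k + 1 : ℕ) : ℝ) - 1)) *
            ‖x - y‖ ^ α := by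
          have : (k + 1 : ℕ) - 1 = k := rfl
          rw [← hexp, this]
          push_cast; ring
  -- conclude via ciSup
  haveI : Nonempty (↥S × ↥S) := ⟨⟨⟨0, h0S⟩, ⟨0, h0S⟩⟩⟩
  rw [holC]
  apply ciSup_le
  rintro ⟨⟨x, hx⟩, ⟨y, hy⟩⟩
  simp only
  rcases eq_or_ne x y with rfl | hxy
  · simpa [Real.zero_rpow hα0.ne'] using hRHS0
  · have hpos : (0 : ℝ) < ‖x - y‖ ^ α :=
      Real.rpow_pos_of_pos (norm_pos_iff.mpr (sub_ne_zero.mpr hxy)) α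
    rw [div_le_iff₀ hpos]
    exact hpt x hx y hy
end

section
/- With the same setup, the scaled product g(x) = λ(x/δ)·f(x) satisfies Hol(Dg, E) ≤ (1 + 2·Lip(λ) + 3·Hol(Dλ)) · Hol(Df, U). -/
open Set

set_option maxHeartbeats 1000000 in
/-- Let `f : U → E` be `C^{1,α}` with `f(0)=0` and `Df(0)=0`, and let `λ : E → ℝ` be a
`C^{1,α}` unit bump function (equal to `1` on `B_c`, `0` outside `B_1`, range in `[0,1]`).
For `δ > 0` with `B̄_δ ⊆ U`, the product `g(x) = λ(x/δ)·f(x)` (vanishing outside `B_δ`,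
hence defined on all of `E`) satisfies
`Hol(Dg, E) ≤ (1 + 2·Lip(λ) + 3·Hol(Dλ))·Hol(Df, U)`. -/
theorem hol_bump_product_le
    {E : Type*} [NormedAddCommGroup E] [NormedSpace ℝ E]
    {α : ℝ} (hα0 : 0 < α) (hα1 : α < 1)
    (c : ℝ) (hc0 : 0 < c) (hc1 : c < 1)
    (U : Set E) (hU : IsOpen U) (hUc : Convex ℝ U)
    (lam : E → ℝ) (hld : Differentiable ℝ lam)
    (hrange : ∀ x, lam x ∈ Set.Icc (0 : ℝ) 1)
    (hone : ∀ x : E, ‖x‖ ≤ c → lam x = 1)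
    (hzero : ∀ x : E, 1 ≤ ‖x‖ → lam x = 0)
    (hbl : BddAbove (Set.range fun x : E => ‖fderiv ℝ lam x‖))
    (hbh : BddAbove (Set.range fun p : E × E =>
      ‖fderiv ℝ lam p.1 - fderiv ℝ lam p.2‖ / ‖p.1 - p.2‖ ^ α))
    (f : E → E) (hf0 : f 0 = 0) (hDf0 : fderiv ℝ f 0 = 0)
    (hfd : ∀ x ∈ U, DifferentiableAt ℝ f x)
    (hbf : BddAbove (Set.range fun x : U => ‖fderiv ℝ f (x : E)‖))
    (hhf : BddAbove (Set.range fun p : U × U =>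
      ‖fderiv ℝ f (p.1 : E) - fderiv ℝ f (p.2 : E)‖ / ‖(p.1 : E) - (p.2 : E)‖ ^ α))
    (δ : ℝ) (hδ : 0 < δ) (hδU : Metric.closedBall (0 : E) δ ⊆ U) :
    holC α (fun x => lam (δ⁻¹ • x) • f x) Set.univ ≤
      (1 + 2 * (⨆ x : E, ‖fderiv ℝ lam x‖) +
          3 * ⨆ p : E × E, ‖fderiv ℝ lam p.1 - fderiv ℝ lam p.2‖ / ‖p.1 - p.2‖ ^ α) *
        holC α f U := by
  classical
  set g : E → E := fun x => lam (δ⁻¹ • x) • f x with hgdef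
  set L : ℝ := ⨆ x : E, ‖fderiv ℝ lam x‖ with hLdef
  set K : ℝ := ⨆ p : E × E, ‖fderiv ℝ lam p.1 - fderiv ℝ lam p.2‖ / ‖p.1 - p.2‖ ^ α with hKdef
  set H : ℝ := holC α f U with hHdef
  have h0U : (0 : E) ∈ U := hδU (by simp [Metric.mem_closedBall, hδ.le])
  have hxU : ∀ x : E, ‖x‖ ≤ δ → x ∈ U := fun x hx =>
    hδU (by simpa [Metric.mem_closedBall, dist_zero_right] using hx)
  -- nonnegativity of the three constants
  have hL0 : 0 ≤ L := le_trans (norm_nonneg _) (le_ciSup hbl 0)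
  have hK0 : 0 ≤ K := by
    have h := le_ciSup hbh ((0 : E), (0 : E))
    refine le_trans ?_ h
    positivity
  have hH0 : 0 ≤ H := by
    have h := le_ciSup hhf ((⟨0, h0U⟩ : U), (⟨0, h0U⟩ : U))
    rw [hHdef, holC]
    refine le_trans ?_ h
    positivity
  -- Hölder bounds from the suprema
  have hDfH : ∀ x ∈ U, ∀ y ∈ U, ‖fderiv ℝ f x - fderiv ℝ f y‖ ≤ H * ‖x - y‖ ^ α := by
    intro x hx y hy
    rcases eq_or_ne x y with rfl | hxy
    · rw [sub_self, sub_self, norm_zero, norm_zero]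
      exact mul_nonneg hH0 (Real.rpow_nonneg le_rfl α)
    · have h1 : ‖fderiv ℝ f x - fderiv ℝ f y‖ / ‖x - y‖ ^ α ≤ H := by
        have := le_ciSup hhf ((⟨x, hx⟩ : U), (⟨y, hy⟩ : U))
        rw [hHdef, holC]
        exact this
      have h2 : (0 : ℝ) < ‖x - y‖ ^ α :=
        Real.rpow_pos_of_pos (norm_pos_iff.2 (sub_ne_zero.2 hxy)) α
      exact (div_le_iff₀ h2).mp h1
  have hDlamL : ∀ u : E, ‖fderiv ℝ lam u‖ ≤ L := fun u => le_ciSup hbl u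
  have hDlamK : ∀ u v : E, ‖fderiv ℝ lam u - fderiv ℝ lam v‖ ≤ K * ‖u - v‖ ^ α := by
    intro u v
    rcases eq_or_ne u v with rfl | huv
    · rw [sub_self, sub_self, norm_zero, norm_zero]
      exact mul_nonneg hK0 (Real.rpow_nonneg le_rfl α)
    · have h1 : ‖fderiv ℝ lam u - fderiv ℝ lam v‖ / ‖u - v‖ ^ α ≤ K := le_ciSup hbh (u, v)
      have h2 : (0 : ℝ) < ‖u - v‖ ^ α :=
        Real.rpow_pos_of_pos (norm_pos_iff.2 (sub_ne_zero.2 huv)) α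
      exact (div_le_iff₀ h2).mp h1
  -- Dλ vanishes for ‖u‖ ≥ 1
  have hDlam_zero : ∀ u : E, (1 : ℝ) ≤ ‖u‖ → fderiv ℝ lam u = 0 := by
    intro u hu
    have hmin : IsLocalMin lam u := by
      apply Filter.Eventually.of_forall
      intro y
      rw [hzero u hu]
      exact (hrange y).1
    exact hmin.fderiv_eq_zero
  -- L ≤ K
  have hLK : L ≤ K := by
    apply ciSup_le
    intro u
    by_cases h1 : (1 : ℝ) ≤ ‖u‖
    · simp [hDlam_zero u h1, hK0]
    push_neg at h1
    by_cases h2 : ‖u‖ < c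
    · have hloc : fderiv ℝ lam u = 0 := by
        have heq : lam =ᶠ[nhds u] fun _ => (1 : ℝ) := by
          have : Metric.ball (0 : E) c ∈ nhds u := by
            apply (Metric.isOpen_ball).mem_nhds
            simpa [Metric.mem_ball, dist_zero_right] using h2
          filter_upwards [this] with y hy
          exact hone y (le_of_lt (by simpa [Metric.mem_ball, dist_zero_right] using hy))
        rw [heq.fderiv_eq]
        simp
      simp [hloc, hK0]
    push_neg at h2
    have hu0 : u ≠ 0 := by
      intro h
      rw [h] at h2
      simp at h2
      linarith
    have hun : (0 : ℝ) < ‖u‖ := norm_pos_iff.2 hu0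
    set v : E := ((1 + c / 2) / ‖u‖) • u with hvdef
    have hnv : ‖v‖ = 1 + c / 2 := by
      rw [hvdef, norm_smul, Real.norm_eq_abs, abs_of_pos (by positivity)]
      field_simp
    have hDv : fderiv ℝ lam v = 0 := hDlam_zero v (by rw [hnv]; linarith)
    have huv : ‖u - v‖ ≤ 1 := by
      have hrepr : u - v = (1 - (1 + c / 2) / ‖u‖) • u := by
        rw [hvdef, sub_smul, one_smul]
      rw [hrepr, norm_smul, Real.norm_eq_abs]
      have ht : (1 : ℝ) < (1 + c / 2) / ‖u‖ := by
        rw [lt_div_iff₀ hun]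
        linarith
      rw [abs_of_neg (by linarith)]
      have : -(1 - (1 + c / 2) / ‖u‖) * ‖u‖ = (1 + c / 2) - ‖u‖ := by
        field_simp
        ring
      rw [this]
      linarith
    calc ‖fderiv ℝ lam u‖ = ‖fderiv ℝ lam u - fderiv ℝ lam v‖ := by rw [hDv, sub_zero]
      _ ≤ K * ‖u - v‖ ^ α := hDlamK u v
      _ ≤ K * 1 := by
          apply mul_le_mul_of_nonneg_left _ hK0
          exact Real.rpow_le_one (norm_nonneg _) huv hα0.le
      _ = K := mul_one K
  -- The derivative of g
  set D := fun x : E =>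
    lam (δ⁻¹ • x) • fderiv ℝ f x + (δ⁻¹ • fderiv ℝ lam (δ⁻¹ • x)).smulRight (f x) with hDdef
  have hg' : ∀ x ∈ U, HasFDerivAt g (D x) x := by
    intro x hx
    have h1 : HasFDerivAt (fun y : E => δ⁻¹ • y) (δ⁻¹ • ContinuousLinearMap.id ℝ E) x :=
      (hasFDerivAt_id x).const_smul δ⁻¹
    have h2 : HasFDerivAt (fun y => lam (δ⁻¹ • y)) (δ⁻¹ • fderiv ℝ lam (δ⁻¹ • x)) x := by
      have := ((hld (δ⁻¹ • x)).hasFDerivAt).comp x h1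
      refine this.congr_fderiv ?_
      ext v
      simp
    exact h2.smul (hfd x hx).hasFDerivAt
  have hfderiv_in : ∀ x : E, ‖x‖ ≤ δ → fderiv ℝ g x = D x := fun x hx =>
    (hg' x (hxU x hx)).fderiv
  have hfderiv_out : ∀ x : E, δ < ‖x‖ → fderiv ℝ g x = 0 := by
    intro x hx
    have heq : g =ᶠ[nhds x] fun _ => (0 : E) := by
      have hopen : IsOpen {y : E | δ < ‖y‖} := isOpen_lt continuous_const continuous_norm
      filter_upwards [hopen.mem_nhds hx] with y hy
      have hy1 : (1 : ℝ) ≤ ‖δ⁻¹ • y‖ := by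
        rw [norm_smul, Real.norm_eq_abs, abs_of_pos (inv_pos.2 hδ)]
        rw [le_inv_mul_iff₀ hδ, mul_one]
        exact le_of_lt hy
      show lam (δ⁻¹ • y) • f y = 0
      rw [hzero _ hy1, zero_smul]
    rw [heq.fderiv_eq]
    exact fderiv_const_apply 0
  have hD_boundary : ∀ x : E, ‖x‖ = δ → D x = 0 := by
    intro x hx
    have h1 : ‖δ⁻¹ • x‖ = 1 := by
      rw [norm_smul, Real.norm_eq_abs, abs_of_pos (inv_pos.2 hδ), hx]
      field_simp
    rw [hDdef]
    simp only []
    rw [hzero _ h1.ge, hDlam_zero _ h1.ge]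
    simp only [zero_smul, smul_zero, zero_add]
    ext v
    simp
  -- quantitative bounds inside the ball
  have hDf_ball : ∀ x : E, ‖x‖ ≤ δ → ‖fderiv ℝ f x‖ ≤ H * δ ^ α := by
    intro x hx
    have h1 := hDfH x (hxU x hx) 0 h0U
    rw [hDf0, sub_zero, sub_zero] at h1
    calc ‖fderiv ℝ f x‖ ≤ H * ‖x‖ ^ α := h1
      _ ≤ H * δ ^ α :=
        mul_le_mul_of_nonneg_left (Real.rpow_le_rpow (norm_nonneg _) hx hα0.le) hH0
  have hf_lip : ∀ x y : E, ‖x‖ ≤ δ → ‖y‖ ≤ δ → ‖f x - f y‖ ≤ H * δ ^ α * ‖x - y‖ := by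
    intro x y hx hy
    have hxb : x ∈ Metric.closedBall (0 : E) δ := by
      simpa [Metric.mem_closedBall, dist_zero_right] using hx
    have hyb : y ∈ Metric.closedBall (0 : E) δ := by
      simpa [Metric.mem_closedBall, dist_zero_right] using hy
    exact (convex_closedBall (0 : E) δ).norm_image_sub_le_of_norm_fderiv_le
      (fun z hz => hfd z (hδU hz))
      (fun z hz => hDf_ball z (by simpa [Metric.mem_closedBall, dist_zero_right] using hz))
      hyb hxb
  have hf_ball : ∀ y : E, ‖y‖ ≤ δ → ‖f y‖ ≤ H * δ ^ α * δ := by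
    intro y hy
    have := hf_lip y 0 hy (by simp [hδ.le])
    rw [hf0, sub_zero, sub_zero] at this
    calc ‖f y‖ ≤ H * δ ^ α * ‖y‖ := this
      _ ≤ H * δ ^ α * δ :=
        mul_le_mul_of_nonneg_left hy (by positivity)
  have hlam_lip : ∀ a b : E, |lam a - lam b| ≤ L * ‖a - b‖ := by
    intro a b
    have := convex_univ.norm_image_sub_le_of_norm_fderiv_le (f := lam)
      (fun z _ => hld z) (fun z _ => hDlamL z) (mem_univ b) (mem_univ a)
    simpa [Real.norm_eq_abs] using this
  -- key scaling inequality
  have hkey : ∀ x y : E, ‖x‖ ≤ δ → ‖y‖ ≤ δ → δ⁻¹ * ‖x - y‖ * δ ^ α ≤ 2 * ‖x - y‖ ^ α := by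
    intro x y hx hy
    have hxy2 : ‖x - y‖ ≤ 2 * δ := by
      calc ‖x - y‖ ≤ ‖x‖ + ‖y‖ := norm_sub_le x y
        _ ≤ 2 * δ := by linarith
    rcases eq_or_lt_of_le (norm_nonneg (x - y)) with h | h
    · rw [← h]
      rw [Real.zero_rpow hα0.ne']
      simp
    · have h1 : ‖x - y‖ = ‖x - y‖ ^ (1 - α) * ‖x - y‖ ^ α := by
        rw [← Real.rpow_add h]
        norm_num
      have h2 : ‖x - y‖ ^ (1 - α) ≤ 2 * δ ^ (1 - α) := by
        calc ‖x - y‖ ^ (1 - α) ≤ (2 * δ) ^ (1 - α) :=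
            Real.rpow_le_rpow h.le hxy2 (by linarith)
          _ = 2 ^ (1 - α) * δ ^ (1 - α) := Real.mul_rpow (by norm_num) hδ.le
          _ ≤ 2 * δ ^ (1 - α) := by
              apply mul_le_mul_of_nonneg_right _ (Real.rpow_nonneg hδ.le _)
              calc (2 : ℝ) ^ (1 - α) ≤ 2 ^ (1 : ℝ) :=
                  Real.rpow_le_rpow_of_exponent_le one_le_two (by linarith)
                _ = 2 := Real.rpow_one 2
      have h5 : δ ^ (1 - α) * δ ^ α = δ := by
        rw [← Real.rpow_add hδ]
        norm_num
      have hB : (0 : ℝ) ≤ ‖x - y‖ ^ α := Real.rpow_nonneg (norm_nonneg _) α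
      have hda : (0 : ℝ) < δ ^ α := Real.rpow_pos_of_pos hδ α
      calc δ⁻¹ * ‖x - y‖ * δ ^ α
          = δ⁻¹ * δ ^ α * (‖x - y‖ ^ (1 - α) * ‖x - y‖ ^ α) := by rw [← h1]; ring
        _ ≤ δ⁻¹ * δ ^ α * (2 * δ ^ (1 - α) * ‖x - y‖ ^ α) := by
            apply mul_le_mul_of_nonneg_left _ (by positivity)
            exact mul_le_mul_of_nonneg_right h2 hB
        _ = 2 * (δ⁻¹ * (δ ^ (1 - α) * δ ^ α)) * ‖x - y‖ ^ α := by ring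
        _ = 2 * ‖x - y‖ ^ α := by rw [h5, inv_mul_cancel₀ hδ.ne', mul_one]
  -- the main estimate inside the closed ball
  have hM0 : (0 : ℝ) ≤ 1 + 2 * L + 3 * K := by linarith
  have hP : ∀ x y : E, ‖x‖ ≤ δ → ‖y‖ ≤ δ →
      ‖D x - D y‖ ≤ (1 + 2 * L + 3 * K) * H * ‖x - y‖ ^ α := by
    intro x y hx hy
    have hab : ‖δ⁻¹ • x - δ⁻¹ • y‖ = δ⁻¹ * ‖x - y‖ := by
      rw [← smul_sub, norm_smul, Real.norm_eq_abs, abs_of_pos (inv_pos.2 hδ)]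
    have hB : (0 : ℝ) ≤ ‖x - y‖ ^ α := Real.rpow_nonneg (norm_nonneg _) α
    have hdecomp : D x - D y =
        lam (δ⁻¹ • x) • (fderiv ℝ f x - fderiv ℝ f y)
        + (lam (δ⁻¹ • x) - lam (δ⁻¹ • y)) • fderiv ℝ f y
        + (δ⁻¹ • fderiv ℝ lam (δ⁻¹ • x)).smulRight (f x - f y)
        + (δ⁻¹ • (fderiv ℝ lam (δ⁻¹ • x) - fderiv ℝ lam (δ⁻¹ • y))).smulRight (f y) := by
      rw [hDdef]
      ext v
      simp [ContinuousLinearMap.smulRight_apply, smul_sub, sub_smul, smul_smul]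
      module
    have n1 : ‖lam (δ⁻¹ • x) • (fderiv ℝ f x - fderiv ℝ f y)‖ ≤ H * ‖x - y‖ ^ α := by
      rw [norm_smul, Real.norm_eq_abs]
      have h1 : |lam (δ⁻¹ • x)| ≤ 1 :=
        abs_le.2 ⟨by linarith [(hrange (δ⁻¹ • x)).1], (hrange (δ⁻¹ • x)).2⟩
      calc |lam (δ⁻¹ • x)| * ‖fderiv ℝ f x - fderiv ℝ f y‖
          ≤ 1 * (H * ‖x - y‖ ^ α) :=
            mul_le_mul h1 (hDfH x (hxU x hx) y (hxU y hy)) (norm_nonneg _) zero_le_one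
        _ = H * ‖x - y‖ ^ α := one_mul _
    have n2 : ‖(lam (δ⁻¹ • x) - lam (δ⁻¹ • y)) • fderiv ℝ f y‖ ≤ 2 * L * H * ‖x - y‖ ^ α := by
      rw [norm_smul, Real.norm_eq_abs]
      calc |lam (δ⁻¹ • x) - lam (δ⁻¹ • y)| * ‖fderiv ℝ f y‖
          ≤ (L * (δ⁻¹ * ‖x - y‖)) * (H * δ ^ α) := by
            apply mul_le_mul _ (hDf_ball y hy) (norm_nonneg _)
            · positivity
            · have := hlam_lip (δ⁻¹ • x) (δ⁻¹ • y)
              rwa [hab] at this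
        _ = L * H * (δ⁻¹ * ‖x - y‖ * δ ^ α) := by ring
        _ ≤ L * H * (2 * ‖x - y‖ ^ α) := by
            apply mul_le_mul_of_nonneg_left (hkey x y hx hy) (by positivity)
        _ = 2 * L * H * ‖x - y‖ ^ α := by ring
    have n3 : ‖(δ⁻¹ • fderiv ℝ lam (δ⁻¹ • x)).smulRight (f x - f y)‖
        ≤ 2 * K * H * ‖x - y‖ ^ α := by
      rw [ContinuousLinearMap.norm_smulRight_apply, norm_smul, Real.norm_eq_abs,
        abs_of_pos (inv_pos.2 hδ)]
      calc δ⁻¹ * ‖fderiv ℝ lam (δ⁻¹ • x)‖ * ‖f x - f y‖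
          ≤ δ⁻¹ * L * (H * δ ^ α * ‖x - y‖) := by
            apply mul_le_mul _ (hf_lip x y hx hy) (norm_nonneg _) (by positivity)
            exact mul_le_mul_of_nonneg_left (hDlamL _) (by positivity)
        _ = L * H * (δ⁻¹ * ‖x - y‖ * δ ^ α) := by ring
        _ ≤ L * H * (2 * ‖x - y‖ ^ α) :=
            mul_le_mul_of_nonneg_left (hkey x y hx hy) (by positivity)
        _ = 2 * L * H * ‖x - y‖ ^ α := by ring
        _ ≤ 2 * K * H * ‖x - y‖ ^ α := by
            apply mul_le_mul_of_nonneg_right _ hB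
            have := mul_le_mul_of_nonneg_right hLK (by linarith : (0:ℝ) ≤ 2 * H)
            nlinarith
    have n4 : ‖(δ⁻¹ • (fderiv ℝ lam (δ⁻¹ • x) - fderiv ℝ lam (δ⁻¹ • y))).smulRight (f y)‖
        ≤ K * H * ‖x - y‖ ^ α := by
      rw [ContinuousLinearMap.norm_smulRight_apply, norm_smul, Real.norm_eq_abs,
        abs_of_pos (inv_pos.2 hδ)]
      have h1 : ‖fderiv ℝ lam (δ⁻¹ • x) - fderiv ℝ lam (δ⁻¹ • y)‖
          ≤ K * (δ⁻¹ ^ α * ‖x - y‖ ^ α) := by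
        have := hDlamK (δ⁻¹ • x) (δ⁻¹ • y)
        rwa [hab, Real.mul_rpow (by positivity) (norm_nonneg _)] at this
      calc δ⁻¹ * ‖fderiv ℝ lam (δ⁻¹ • x) - fderiv ℝ lam (δ⁻¹ • y)‖ * ‖f y‖
          ≤ δ⁻¹ * (K * (δ⁻¹ ^ α * ‖x - y‖ ^ α)) * (H * δ ^ α * δ) := by
            apply mul_le_mul _ (hf_ball y hy) (norm_nonneg _) (by positivity)
            exact mul_le_mul_of_nonneg_left h1 (by positivity)
        _ = K * H * ‖x - y‖ ^ α * ((δ⁻¹ * δ) * (δ⁻¹ ^ α * δ ^ α)) := by ring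
        _ = K * H * ‖x - y‖ ^ α := by
            rw [inv_mul_cancel₀ hδ.ne', ← Real.mul_rpow (by positivity) hδ.le,
              inv_mul_cancel₀ hδ.ne', Real.one_rpow]
            ring
    calc ‖D x - D y‖
        = ‖lam (δ⁻¹ • x) • (fderiv ℝ f x - fderiv ℝ f y)
            + (lam (δ⁻¹ • x) - lam (δ⁻¹ • y)) • fderiv ℝ f y
            + (δ⁻¹ • fderiv ℝ lam (δ⁻¹ • x)).smulRight (f x - f y)
            + (δ⁻¹ • (fderiv ℝ lam (δ⁻¹ • x) - fderiv ℝ lam (δ⁻¹ • y))).smulRight (f y)‖ := by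
          rw [hdecomp]
      _ ≤ ‖lam (δ⁻¹ • x) • (fderiv ℝ f x - fderiv ℝ f y)
            + (lam (δ⁻¹ • x) - lam (δ⁻¹ • y)) • fderiv ℝ f y
            + (δ⁻¹ • fderiv ℝ lam (δ⁻¹ • x)).smulRight (f x - f y)‖
          + ‖(δ⁻¹ • (fderiv ℝ lam (δ⁻¹ • x) - fderiv ℝ lam (δ⁻¹ • y))).smulRight (f y)‖ :=
          norm_add_le _ _
      _ ≤ ‖lam (δ⁻¹ • x) • (fderiv ℝ f x - fderiv ℝ f y)
            + (lam (δ⁻¹ • x) - lam (δ⁻¹ • y)) • fderiv ℝ f y‖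
          + ‖(δ⁻¹ • fderiv ℝ lam (δ⁻¹ • x)).smulRight (f x - f y)‖
          + ‖(δ⁻¹ • (fderiv ℝ lam (δ⁻¹ • x) - fderiv ℝ lam (δ⁻¹ • y))).smulRight (f y)‖ := by
          gcongr
          exact norm_add_le _ _
      _ ≤ ‖lam (δ⁻¹ • x) • (fderiv ℝ f x - fderiv ℝ f y)‖
          + ‖(lam (δ⁻¹ • x) - lam (δ⁻¹ • y)) • fderiv ℝ f y‖
          + ‖(δ⁻¹ • fderiv ℝ lam (δ⁻¹ • x)).smulRight (f x - f y)‖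
          + ‖(δ⁻¹ • (fderiv ℝ lam (δ⁻¹ • x) - fderiv ℝ lam (δ⁻¹ • y))).smulRight (f y)‖ := by
          gcongr
          exact norm_add_le _ _
      _ ≤ H * ‖x - y‖ ^ α + 2 * L * H * ‖x - y‖ ^ α + 2 * K * H * ‖x - y‖ ^ α
          + K * H * ‖x - y‖ ^ α := by
          exact add_le_add (add_le_add (add_le_add n1 n2) n3) n4
      _ = (1 + 2 * L + 3 * K) * H * ‖x - y‖ ^ α := by ring
  -- crossing the boundary: a point on the segment with norm δ
  have hcross : ∀ x y : E, ‖x‖ ≤ δ → δ < ‖y‖ → ∃ z : E, ‖z‖ = δ ∧ ‖x - z‖ ≤ ‖x - y‖ := by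
    intro x y hx hy
    have hcont : ContinuousOn (fun t : ℝ => ‖x + t • (y - x)‖) (Icc 0 1) := by
      apply Continuous.continuousOn
      continuity
    have hsub := intermediate_value_Icc (zero_le_one) hcont
    have hmem : δ ∈ Icc ‖x + (0:ℝ) • (y - x)‖ ‖x + (1:ℝ) • (y - x)‖ := by
      constructor
      · simpa using hx
      · simp only [one_smul, add_sub_cancel]
        exact hy.le
    obtain ⟨t, ht01, ht⟩ := hsub hmem
    refine ⟨x + t • (y - x), ht, ?_⟩
    have : x - (x + t • (y - x)) = (-t) • (y - x) := by
      rw [neg_smul]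
      abel
    rw [this, norm_smul, Real.norm_eq_abs, abs_neg, abs_of_nonneg ht01.1, norm_sub_rev]
    calc t * ‖x - y‖ ≤ 1 * ‖x - y‖ :=
        mul_le_mul_of_nonneg_right ht01.2 (norm_nonneg _)
      _ = ‖x - y‖ := one_mul _
  -- the global estimate
  have hmain : ∀ x y : E,
      ‖fderiv ℝ g x - fderiv ℝ g y‖ ≤ (1 + 2 * L + 3 * K) * H * ‖x - y‖ ^ α := by
    have haux : ∀ x y : E, ‖x‖ ≤ δ → δ < ‖y‖ →
        ‖fderiv ℝ g x - fderiv ℝ g y‖ ≤ (1 + 2 * L + 3 * K) * H * ‖x - y‖ ^ α := by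
      intro x y hx hy
      obtain ⟨z, hz, hxz⟩ := hcross x y hx hy
      rw [hfderiv_in x hx, hfderiv_out y hy, sub_zero]
      have h1 : D x = D x - D z + D z := by abel
      calc ‖D x‖ = ‖D x - D z‖ := by rw [hD_boundary z hz, sub_zero]
        _ ≤ (1 + 2 * L + 3 * K) * H * ‖x - z‖ ^ α := hP x z hx hz.le
        _ ≤ (1 + 2 * L + 3 * K) * H * ‖x - y‖ ^ α := by
            apply mul_le_mul_of_nonneg_left _ (mul_nonneg hM0 hH0)
            exact Real.rpow_le_rpow (norm_nonneg _) hxz hα0.le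
    intro x y
    by_cases hx : ‖x‖ ≤ δ <;> by_cases hy : ‖y‖ ≤ δ
    · rw [hfderiv_in x hx, hfderiv_in y hy]
      exact hP x y hx hy
    · exact haux x y hx (not_le.1 hy)
    · rw [norm_sub_rev, norm_sub_rev x y]
      exact haux y x hy (not_le.1 hx)
    · rw [hfderiv_out x (not_le.1 hx), hfderiv_out y (not_le.1 hy), sub_zero, norm_zero]
      positivity
  -- conclude
  haveI : Nonempty (↥(Set.univ : Set E) × ↥(Set.univ : Set E)) :=
    ⟨⟨0, mem_univ 0⟩, ⟨0, mem_univ 0⟩⟩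
  rw [holC]
  apply ciSup_le
  rintro ⟨⟨x, -⟩, ⟨y, -⟩⟩
  simp only []
  rcases eq_or_ne x y with rfl | hxy
  · simp only [sub_self, norm_zero, zero_div]
    exact mul_nonneg hM0 hH0
  · have h2 : (0 : ℝ) < ‖x - y‖ ^ α :=
      Real.rpow_pos_of_pos (norm_pos_iff.2 (sub_ne_zero.2 hxy)) α
    rw [div_le_iff₀ h2]
    exact hmain x y
end
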